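/- Let G be a finite simple graph whose connected components are C₁, C₂, …, C_n with n ≥ 2, where each component admits a 2-synchronous bondage set and the components are indexed so that b(C₁) ≤ b(C₂) ≤ … ≤ b(C_n). Then Sb₂(G) = min{ Sb₂(C₁), Sb₂(C₂), …, Sb₂(C_n), b(C₁) + b(C₂) }. -/

import Mathlib

/-!
The domination number is additive over connected components, and deleting a set of edges
deletes, inside each component, the edges of that component. Hence a 2-synchronous bondage set
of `G` raises the domination number either of one component by 2, costing at least its `Sb₂`,
or of two components by 1 each, costing at least the sum of their bondage numbers, which is
smallest for the first two components in the sorted order. Conversely, such edge sets of the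
components are 2-synchronous bondage sets of `G`; bondage sets exist because deleting edges one
at a time raises the domination number by at most one per step.
-/

/-- A finite set of vertices `D` is a dominating set of `G` if every vertex
is in `D` or adjacent to a vertex in `D`. -/
def SimpleGraph.IsDominatingSet {V : Type*} (G : SimpleGraph V) (D : Finset V) : Prop :=
  ∀ v : V, v ∈ D ∨ ∃ u ∈ D, G.Adj u v

/-- The domination number of `G`: the minimum cardinality of a dominating set. -/
noncomputable def SimpleGraph.domNum {V : Type*} (G : SimpleGraph V) : ℕ :=
  sInf {n : ℕ | ∃ D : Finset V, G.IsDominatingSet D ∧ D.card = n}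

/-- The `k`-synchronous bondage number of `G`: the minimum cardinality of a set of edges
whose deletion increases the domination number by exactly `k`.  (`Sb 1` is the classical
bondage number.) -/
noncomputable def SimpleGraph.synchBondage {V : Type*} (G : SimpleGraph V) (k : ℕ) : ℕ :=
  sInf {m : ℕ | ∃ E' : Finset (Sym2 V), ↑E' ⊆ G.edgeSet ∧
    (G.deleteEdges ↑E').domNum = G.domNum + k ∧ E'.card = m}

lemma exists_eq_two_or_exists_ne_eq_one_of_sum_eq_two {ι : Type*} [Fintype ι] {a : ι → ℕ}
    (h : ∑ i, a i = 2) : (∃ i, a i = 2) ∨ ∃ i j, i ≠ j ∧ a i = 1 ∧ a j = 1 := by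
  classical
  obtain ⟨i, -, hi⟩ := Finset.exists_ne_zero_of_sum_ne_zero (h.trans_ne two_ne_zero)
  have hrest : ∑ j ∈ Finset.univ.erase i, a j + a i = 2 :=
    h ▸ Finset.sum_erase_add _ _ (Finset.mem_univ i)
  by_cases h2 : a i = 2
  · exact Or.inl ⟨i, h2⟩
  obtain ⟨j, hj, hj0⟩ := Finset.exists_ne_zero_of_sum_ne_zero (s := Finset.univ.erase i)
    (f := a) (by omega)
  have := Finset.single_le_sum (f := a) (fun _ _ => Nat.zero_le _) hj
  exact Or.inr ⟨i, j, (Finset.ne_of_mem_erase hj).symm, by omega, by omega⟩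

lemma Monotone.apply_zero_add_apply_one_le {M : Type*} [AddCommMonoid M] [PartialOrder M]
    [IsOrderedAddMonoid M] {n : ℕ} {f : Fin n → M} (hf : Monotone f) {i j : Fin n}
    (hij : i ≠ j) (h0 : 0 < n) (h1 : 1 < n) : f ⟨0, h0⟩ + f ⟨1, h1⟩ ≤ f i + f j := by
  wlog hlt : i < j generalizing i j
  · rw [add_comm (f i)]
    exact this hij.symm (hij.symm.lt_of_le (not_lt.1 hlt))
  exact add_le_add (hf (Fin.le_def.2 (Nat.zero_le _)))
    (hf (Fin.le_def.2 (Nat.one_le_of_lt (Fin.lt_def.1 hlt))))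

open Finset

namespace SimpleGraph

variable {V : Type*} {G H : SimpleGraph V}

lemma IsDominatingSet.mono {D : Finset V} (hHG : H ≤ G) (hD : H.IsDominatingSet D) :
    G.IsDominatingSet D :=
  fun v => (hD v).imp_right fun ⟨u, hu, huv⟩ => ⟨u, hu, hHG huv⟩

lemma domNum_le_card {D : Finset V} (hD : G.IsDominatingSet D) : G.domNum ≤ D.card :=
  Nat.sInf_le ⟨D, hD, rfl⟩

/-- Deleting `uv` can only leave `u` undominated, and only when `v ∈ D` and `u ∉ D`. -/
lemma IsDominatingSet.deleteEdges_insert [DecidableEq V] {D : Finset V}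
    (hD : G.IsDominatingSet D) {u v : V} (hvu : v ∈ D → u ∈ D) :
    (G.deleteEdges {s(u, v)}).IsDominatingSet (insert v D) := by
  intro w
  by_cases hwv : w = v
  · exact Or.inl (hwv ▸ mem_insert_self v D)
  rcases hD w with hw | ⟨x, hx, hxw⟩
  · exact Or.inl (mem_insert_of_mem hw)
  by_cases he : s(x, w) = s(u, v)
  · rcases Sym2.eq_iff.1 he with ⟨-, rfl⟩ | ⟨rfl, rfl⟩
    · exact absurd rfl hwv
    · exact Or.inl (mem_insert_of_mem (hvu hx))
  · exact Or.inr ⟨x, mem_insert_of_mem hx, deleteEdges_adj.2 ⟨hxw, he⟩⟩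

section Finite

variable [Finite V]

variable (G) in
lemma exists_isDominatingSet_card_eq_domNum :
    ∃ D : Finset V, G.IsDominatingSet D ∧ D.card = G.domNum :=
  have := Fintype.ofFinite V
  Nat.sInf_mem (s := {n | ∃ D : Finset V, G.IsDominatingSet D ∧ D.card = n})
    ⟨_, univ, fun v => Or.inl (mem_univ v), rfl⟩

lemma domNum_antitone : Antitone (domNum : SimpleGraph V → ℕ) := fun H G hHG => by
  obtain ⟨D, hD, hcard⟩ := H.exists_isDominatingSet_card_eq_domNum
  exact hcard ▸ domNum_le_card (hD.mono hHG)

lemma domNum_deleteEdges_singleton_le (e : Sym2 V) :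
    (G.deleteEdges {e}).domNum ≤ G.domNum + 1 := by
  classical
  obtain ⟨D, hD, hcard⟩ := G.exists_isDominatingSet_card_eq_domNum
  induction e with | _ u v => ?_
  by_cases hu : u ∈ D
  · calc _ ≤ (insert v D).card := domNum_le_card (hD.deleteEdges_insert fun _ => hu)
      _ ≤ G.domNum + 1 := hcard ▸ card_insert_le v D
  · rw [Sym2.eq_swap]
    calc _ ≤ (insert u D).card := domNum_le_card (hD.deleteEdges_insert fun h => absurd h hu)
      _ ≤ G.domNum + 1 := hcard ▸ card_insert_le u D

/-- Deleting edges one at a time raises the domination number in steps of at most one. -/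
lemma exists_subset_domNum_deleteEdges_eq (E : Finset (Sym2 V)) {t : ℕ} (h₁ : G.domNum ≤ t)
    (h₂ : t ≤ (G.deleteEdges ↑E).domNum) : ∃ F ⊆ E, (G.deleteEdges ↑F).domNum = t := by
  classical
  induction E using Finset.induction_on with
  | empty =>
    exact ⟨∅, empty_subset _, by simp only [coe_empty, deleteEdges_empty] at h₂ ⊢; omega⟩
  | insert e E _ ih =>
    by_cases ht : t ≤ (G.deleteEdges ↑E).domNum
    · obtain ⟨F, hFE, hF⟩ := ih ht
      exact ⟨F, hFE.trans (subset_insert e E), hF⟩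
    refine ⟨insert e E, subset_rfl, le_antisymm ?_ h₂⟩
    rw [coe_insert, Set.insert_eq, Set.union_comm, ← deleteEdges_deleteEdges]
    have := (G.deleteEdges ↑E).domNum_deleteEdges_singleton_le e
    omega

end Finite

def IsSynchBondageSet (G : SimpleGraph V) (k : ℕ) (E : Finset (Sym2 V)) : Prop :=
  ↑E ⊆ G.edgeSet ∧ (G.deleteEdges ↑E).domNum = G.domNum + k

variable {k l : ℕ}

lemma synchBondage_le_card {E : Finset (Sym2 V)} (hE : G.IsSynchBondageSet k E) :
    G.synchBondage k ≤ E.card :=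
  Nat.sInf_le ⟨E, hE.1, hE.2, rfl⟩

lemma exists_isSynchBondageSet_card_eq (h : ∃ E, G.IsSynchBondageSet k E) :
    ∃ E, G.IsSynchBondageSet k E ∧ E.card = G.synchBondage k := by
  obtain ⟨E, hE⟩ := h
  obtain ⟨F, hFG, hF, hcard⟩ := Nat.sInf_mem (s := {m | ∃ F : Finset (Sym2 V),
      ↑F ⊆ G.edgeSet ∧ (G.deleteEdges ↑F).domNum = G.domNum + k ∧ F.card = m})
    ⟨E.card, E, hE.1, hE.2, rfl⟩
  exact ⟨F, ⟨hFG, hF⟩, hcard⟩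

lemma exists_isSynchBondageSet_of_le [Finite V] (hkl : k ≤ l)
    (h : ∃ E, G.IsSynchBondageSet l E) : ∃ E, G.IsSynchBondageSet k E := by
  obtain ⟨E, hEG, hE⟩ := h
  obtain ⟨F, hFE, hF⟩ :=
    exists_subset_domNum_deleteEdges_eq E (t := G.domNum + k) le_self_add (by omega)
  exact ⟨F, (coe_subset.2 hFE).trans hEG, hF⟩

lemma induce_deleteEdges (s : Set V) (E : Set (Sym2 V)) :
    (G.deleteEdges E).induce s = (G.induce s).deleteEdges (Sym2.map (↑) ⁻¹' E) := by
  ext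
  simp

lemma preimage_sym2Map_val_edgeSet (s : Set V) :
    Sym2.map ((↑) : s → V) ⁻¹' G.edgeSet = (G.induce s).edgeSet := by
  ext x
  induction x with | _ a b => rfl

lemma image_sym2Map_val_subset_edgeSet {s : Set V} {F : Set (Sym2 s)}
    (hF : F ⊆ (G.induce s).edgeSet) : Sym2.map (↑) '' F ⊆ G.edgeSet := by
  rw [← preimage_sym2Map_val_edgeSet] at hF
  exact Set.image_subset_iff.2 hF

lemma sym2Map_val_ne_of_disjoint {s t : Set V} (hst : Disjoint s t) (x : Sym2 s)
    (y : Sym2 t) : x.map (↑) ≠ y.map ((↑) : t → V) := by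
  induction x with | _ a b => ?_
  intro h
  obtain ⟨a', -, ha'⟩ :=
    Sym2.mem_map.1 (h ▸ Sym2.mem_map.2 ⟨a, Sym2.mem_mk_left a b, rfl⟩)
  exact Set.disjoint_left.1 hst a.2 (ha' ▸ a'.2)

lemma preimage_image_sym2Map_val_of_disjoint {s t : Set V} (hst : Disjoint s t)
    (F : Set (Sym2 s)) : Sym2.map ((↑) : t → V) ⁻¹' (Sym2.map (↑) '' F) = ∅ :=
  Set.eq_empty_of_forall_notMem fun y ⟨x, _, hxy⟩ => sym2Map_val_ne_of_disjoint hst x y hxy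

lemma preimage_image_sym2Map_val (s : Set V) (F : Set (Sym2 s)) :
    Sym2.map ((↑) : s → V) ⁻¹' (Sym2.map (↑) '' F) = F :=
  Set.preimage_image_eq F (Sym2.map.injective Subtype.val_injective)

noncomputable def edgesWithin (s : Set V) (E : Finset (Sym2 V)) : Finset (Sym2 s) :=
  E.preimage (Sym2.map (↑)) (Sym2.map.injective Subtype.val_injective).injOn

lemma coe_edgesWithin (s : Set V) (E : Finset (Sym2 V)) :
    (edgesWithin s E : Set (Sym2 s)) = Sym2.map ((↑) : s → V) ⁻¹' (E : Set (Sym2 V)) :=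
  coe_preimage _ _

lemma coe_map_sym2Map_subtype (s : Set V) (F : Finset (Sym2 s)) :
    (F.map (Function.Embedding.subtype (· ∈ s)).sym2Map : Set (Sym2 V)) =
      Sym2.map (↑) '' (F : Set (Sym2 s)) := by
  ext
  simp

section Components

variable [Fintype G.ConnectedComponent]

lemma sum_card_edgesWithin_supp_le (E : Finset (Sym2 V)) :
    ∑ c : G.ConnectedComponent, (edgesWithin c.supp E).card ≤ E.card := by
  classical
  let lift (c : G.ConnectedComponent) :=
    (edgesWithin c.supp E).map (Function.Embedding.subtype (· ∈ c.supp)).sym2Map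
  have hdisj : (↑(univ : Finset G.ConnectedComponent) : Set _).PairwiseDisjoint lift :=
    fun c _ c' _ hcc' => Finset.disjoint_left.2 fun _ he he' => by
      obtain ⟨x, -, rfl⟩ := mem_map.1 he
      obtain ⟨y, -, hyx⟩ := mem_map.1 he'
      exact sym2Map_val_ne_of_disjoint (G.pairwise_disjoint_supp_connectedComponent hcc') x y
        hyx.symm
  calc ∑ c : G.ConnectedComponent, (edgesWithin c.supp E).card = (univ.biUnion lift).card := by
        simp [card_biUnion hdisj, lift]
    _ ≤ E.card := card_le_card <| biUnion_subset.2 fun c _ e he => by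
        obtain ⟨x, hx, rfl⟩ := mem_map.1 he
        exact mem_preimage.1 hx

variable [Finite V]

lemma domNum_le_sum_domNum_induce_supp (H : SimpleGraph V) :
    H.domNum ≤ ∑ c : G.ConnectedComponent, (H.induce c.supp).domNum := by
  classical
  choose D hD hcard using
    fun c : G.ConnectedComponent => (H.induce c.supp).exists_isDominatingSet_card_eq_domNum
  let U := univ.biUnion fun c => (D c).map (Function.Embedding.subtype (· ∈ c.supp))
  have hU : H.IsDominatingSet U := by
    intro v
    rcases hD _ ⟨v, rfl⟩ with h | ⟨u, hu, huv⟩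
    · exact Or.inl (mem_biUnion.2 ⟨_, mem_univ _, mem_map_of_mem _ h⟩)
    · exact Or.inr ⟨u, mem_biUnion.2 ⟨_, mem_univ _, mem_map_of_mem _ hu⟩, huv⟩
  calc H.domNum ≤ U.card := domNum_le_card hU
    _ ≤ ∑ c : G.ConnectedComponent, ((D c).map (Function.Embedding.subtype _)).card :=
        card_biUnion_le
    _ = ∑ c : G.ConnectedComponent, (H.induce c.supp).domNum := by simp [hcard]

lemma sum_domNum_induce_supp_le_domNum (hHG : H ≤ G) :
    ∑ c : G.ConnectedComponent, (H.induce c.supp).domNum ≤ H.domNum := by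
  classical
  obtain ⟨D, hD, hcard⟩ := H.exists_isDominatingSet_card_eq_domNum
  have hDc (c : G.ConnectedComponent) :
      (H.induce c.supp).IsDominatingSet (D.subtype (· ∈ c.supp)) := by
    rintro ⟨v, hv⟩
    rcases hD v with h | ⟨u, hu, huv⟩
    · exact Or.inl (mem_subtype.2 h)
    · exact Or.inr ⟨⟨u, (c.mem_supp_congr_adj (hHG huv)).2 hv⟩, mem_subtype.2 hu, huv⟩
  calc ∑ c : G.ConnectedComponent, (H.induce c.supp).domNum
        ≤ ∑ c : G.ConnectedComponent, (D.subtype (· ∈ c.supp)).card :=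
        sum_le_sum fun c _ => domNum_le_card (hDc c)
    _ = D.card := by
        rw [card_eq_sum_card_fiberwise (f := G.connectedComponentMk) (t := univ)
          fun _ _ => mem_univ _]
        simp [card_subtype, ConnectedComponent.mem_supp_iff]
    _ = H.domNum := hcard

lemma domNum_eq_sum_domNum_induce_supp (hHG : H ≤ G) :
    H.domNum = ∑ c : G.ConnectedComponent, (H.induce c.supp).domNum :=
  (domNum_le_sum_domNum_induce_supp H).antisymm (sum_domNum_induce_supp_le_domNum hHG)

lemma domNum_deleteEdges_eq_add_sum (E : Set (Sym2 V)) (a : G.ConnectedComponent → ℕ)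
    (ha : ∀ c, ((G.induce c.supp).deleteEdges (Sym2.map (↑) ⁻¹' E)).domNum =
      (G.induce c.supp).domNum + a c) :
    (G.deleteEdges E).domNum = G.domNum + ∑ c, a c := by
  rw [domNum_eq_sum_domNum_induce_supp (deleteEdges_le E),
    domNum_eq_sum_domNum_induce_supp le_rfl, ← sum_add_distrib]
  exact sum_congr rfl fun c _ => by rw [induce_deleteEdges, ha]

lemma IsSynchBondageSet.map_supp {c : G.ConnectedComponent} {F : Finset (Sym2 c.supp)}
    (hF : (G.induce c.supp).IsSynchBondageSet k F) :
    G.IsSynchBondageSet k (F.map (Function.Embedding.subtype _).sym2Map) := by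
  classical
  rw [IsSynchBondageSet, coe_map_sym2Map_subtype]
  refine ⟨image_sym2Map_val_subset_edgeSet hF.1,
    (domNum_deleteEdges_eq_add_sum _ (Pi.single c k) fun d => ?_).trans (by simp)⟩
  rcases eq_or_ne c d with rfl | hcd
  · rw [preimage_image_sym2Map_val, hF.2, Pi.single_eq_same]
  · rw [preimage_image_sym2Map_val_of_disjoint
      (G.pairwise_disjoint_supp_connectedComponent hcd), deleteEdges_empty,
      Pi.single_eq_of_ne' hcd, add_zero]

lemma IsSynchBondageSet.union_map_supp [DecidableEq V] {c c' : G.ConnectedComponent}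
    (hne : c ≠ c') {F : Finset (Sym2 c.supp)} {F' : Finset (Sym2 c'.supp)}
    (hF : (G.induce c.supp).IsSynchBondageSet k F)
    (hF' : (G.induce c'.supp).IsSynchBondageSet l F') :
    G.IsSynchBondageSet (k + l) (F.map (Function.Embedding.subtype _).sym2Map ∪
      F'.map (Function.Embedding.subtype _).sym2Map) := by
  classical
  have hdisj := G.pairwise_disjoint_supp_connectedComponent
  rw [IsSynchBondageSet, coe_union]
  refine ⟨Set.union_subset hF.map_supp.1 hF'.map_supp.1,
    (domNum_deleteEdges_eq_add_sum _ (Pi.single c k + Pi.single c' l) fun d => ?_).trans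
      (by simp [sum_add_distrib])⟩
  rw [coe_map_sym2Map_subtype, coe_map_sym2Map_subtype, Set.preimage_union]
  rcases eq_or_ne c d with rfl | hcd
  · rw [preimage_image_sym2Map_val, preimage_image_sym2Map_val_of_disjoint (hdisj hne.symm),
      Set.union_empty, hF.2]
    simp [hne]
  rcases eq_or_ne c' d with rfl | hc'd
  · rw [preimage_image_sym2Map_val, preimage_image_sym2Map_val_of_disjoint (hdisj hne),
      Set.empty_union, hF'.2]
    simp [hne]
  · rw [preimage_image_sym2Map_val_of_disjoint (hdisj hcd),
      preimage_image_sym2Map_val_of_disjoint (hdisj hc'd), Set.union_empty, deleteEdges_empty]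
    simp [hcd, hc'd]

theorem synchBondage_le_synchBondage_induce_supp {c : G.ConnectedComponent}
    (hc : ∃ F, (G.induce c.supp).IsSynchBondageSet k F) :
    G.synchBondage k ≤ (G.induce c.supp).synchBondage k := by
  obtain ⟨F, hF, hcard⟩ := exists_isSynchBondageSet_card_eq hc
  simpa [hcard] using synchBondage_le_card hF.map_supp

theorem synchBondage_add_le_add {c c' : G.ConnectedComponent} (hne : c ≠ c')
    (hc : ∃ F, (G.induce c.supp).IsSynchBondageSet k F)
    (hc' : ∃ F, (G.induce c'.supp).IsSynchBondageSet l F) :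
    G.synchBondage (k + l) ≤
      (G.induce c.supp).synchBondage k + (G.induce c'.supp).synchBondage l := by
  classical
  obtain ⟨F, hF, hcard⟩ := exists_isSynchBondageSet_card_eq hc
  obtain ⟨F', hF', hcard'⟩ := exists_isSynchBondageSet_card_eq hc'
  calc G.synchBondage (k + l)
      ≤ (F.map (Function.Embedding.subtype _).sym2Map ∪
          F'.map (Function.Embedding.subtype _).sym2Map).card :=
        synchBondage_le_card (hF.union_map_supp hne hF')
    _ ≤ F.card + F'.card := (card_union_le _ _).trans_eq (by rw [card_map, card_map])
    _ = _ := by rw [hcard, hcard']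

lemma IsSynchBondageSet.exists_sum_eq {E : Finset (Sym2 V)} (hE : G.IsSynchBondageSet k E) :
    ∃ a : G.ConnectedComponent → ℕ, ∑ c, a c = k ∧
      ∀ c, (G.induce c.supp).IsSynchBondageSet (a c) (edgesWithin c.supp E) := by
  let a (c : G.ConnectedComponent) :=
    ((G.induce c.supp).deleteEdges ↑(edgesWithin c.supp E)).domNum - (G.induce c.supp).domNum
  have ha (c : G.ConnectedComponent) : ((G.induce c.supp).deleteEdges
      ↑(edgesWithin c.supp E)).domNum = (G.induce c.supp).domNum + a c :=
    (add_tsub_cancel_of_le (domNum_antitone (deleteEdges_le _))).symm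
  refine ⟨a, ?_, fun c => ⟨?_, ha c⟩⟩
  · have := domNum_deleteEdges_eq_add_sum (↑E) a fun c => coe_edgesWithin c.supp E ▸ ha c
    rw [hE.2] at this
    omega
  · rw [coe_edgesWithin, ← preimage_sym2Map_val_edgeSet]
    exact Set.preimage_mono hE.1

theorem IsSynchBondageSet.exists_synchBondage_two_le_or {E : Finset (Sym2 V)}
    (hE : G.IsSynchBondageSet 2 E) :
    (∃ c : G.ConnectedComponent, (G.induce c.supp).synchBondage 2 ≤ E.card) ∨
      ∃ c c' : G.ConnectedComponent, c ≠ c' ∧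
        (G.induce c.supp).synchBondage 1 + (G.induce c'.supp).synchBondage 1 ≤ E.card := by
  classical
  obtain ⟨a, hsum, ha⟩ := hE.exists_sum_eq
  have hcard := sum_card_edgesWithin_supp_le (G := G) E
  have hle (d : G.ConnectedComponent) {m : ℕ} (hd : a d = m) :
      (G.induce d.supp).synchBondage m ≤ (edgesWithin d.supp E).card :=
    synchBondage_le_card (hd ▸ ha d)
  rcases exists_eq_two_or_exists_ne_eq_one_of_sum_eq_two hsum with
    ⟨c, hc⟩ | ⟨c, c', hne, hc, hc'⟩
  · refine Or.inl ⟨c, ?_⟩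
    calc _ ≤ (edgesWithin c.supp E).card := hle c hc
      _ ≤ ∑ d : G.ConnectedComponent, (edgesWithin d.supp E).card :=
          single_le_sum (f := fun d => (edgesWithin d.supp E).card) (fun _ _ => Nat.zero_le _)
            (mem_univ c)
      _ ≤ E.card := hcard
  · refine Or.inr ⟨c, c', hne, ?_⟩
    calc _ ≤ (edgesWithin c.supp E).card + (edgesWithin c'.supp E).card :=
          add_le_add (hle c hc) (hle c' hc')
      _ = ∑ d ∈ {c, c'}, (edgesWithin d.supp E).card :=
          (sum_pair (f := fun d => (edgesWithin d.supp E).card) hne).symm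
      _ ≤ ∑ d : G.ConnectedComponent, (edgesWithin d.supp E).card :=
          sum_le_sum_of_subset (subset_univ _)
      _ ≤ E.card := hcard

end Components

end SimpleGraph

open SimpleGraph

/-- if the connected components `C₁, …, C_n` (`n ≥ 2`) of `G` each admit a
2-synchronous bondage set and are indexed so that `b(C₁) ≤ … ≤ b(C_n)`, then
`Sb₂(G) = min{Sb₂(C₁), …, Sb₂(C_n), b(C₁) + b(C₂)}`. -/
theorem synchBondage_two_of_components {V : Type*} [Fintype V] (G : SimpleGraph V)
    (n : ℕ) (hn : 2 ≤ n) (C : Fin n → G.ConnectedComponent) (hC : Function.Bijective C)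
    (hsorted : ∀ i j : Fin n, i ≤ j →
      (G.induce (C i).supp).synchBondage 1 ≤ (G.induce (C j).supp).synchBondage 1)
    (hadmit : ∀ i : Fin n, ∃ E' : Finset (Sym2 ↥(C i).supp),
      ↑E' ⊆ (G.induce (C i).supp).edgeSet ∧
      ((G.induce (C i).supp).deleteEdges ↑E').domNum = (G.induce (C i).supp).domNum + 2) :
    G.synchBondage 2 =
      min (⨅ i : Fin n, (G.induce (C i).supp).synchBondage 2)
        ((G.induce (C ⟨0, by omega⟩).supp).synchBondage 1 +
          (G.induce (C ⟨1, by omega⟩).supp).synchBondage 1) := by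
  classical
  have : Nonempty (Fin n) := ⟨⟨0, by omega⟩⟩
  have hmono : Monotone fun i => (G.induce (C i).supp).synchBondage 1 := hsorted
  have hadmit₁ (i : Fin n) := exists_isSynchBondageSet_of_le one_le_two (hadmit i)
  have h01 : C ⟨0, by omega⟩ ≠ C ⟨1, by omega⟩ := hC.injective.ne (by simp)
  refine le_antisymm (le_min (le_ciInf fun i => synchBondage_le_synchBondage_induce_supp
    (hadmit i)) (synchBondage_add_le_add h01 (hadmit₁ _) (hadmit₁ _))) ?_
  obtain ⟨F, hF⟩ := hadmit ⟨0, by omega⟩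
  obtain ⟨E, hE, hcard⟩ :=
    exists_isSynchBondageSet_card_eq ⟨_, IsSynchBondageSet.map_supp hF⟩
  rw [← hcard]
  rcases hE.exists_synchBondage_two_le_or with ⟨c, hc⟩ | ⟨c, c', hne, hcc'⟩
  · obtain ⟨i, rfl⟩ := hC.surjective c
    exact (min_le_left _ _).trans ((ciInf_le (OrderBot.bddBelow _) i).trans hc)
  · obtain ⟨i, rfl⟩ := hC.surjective c
    obtain ⟨j, rfl⟩ := hC.surjective c'
    exact (min_le_right _ _).trans
      ((hmono.apply_zero_add_apply_one_le (ne_of_apply_ne C hne) _ _).trans hcc')
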